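/- Let v, w ∈ ℍ be quaternions with w ≠ 0. Then conj(v) * i * v = conj(w) * i * w if and only if there exists θ ∈ ℝ such that v = (cos θ + sin θ • i) * w, where i is the quaternion unit i. -/

import Mathlib

/-- The quaternion unit `i`. -/
noncomputable def quatI : Quaternion ℝ := ⟨0, 1, 0, 0⟩

/-!
Write `v = z * w` with `z = v * w⁻¹`. Then `conj(v) i v = conj(w) (conj(z) i z) w`, so the equation
says `conj(z) i z = i`. Taking norms gives `|z| = 1`, so `conj(z) = z⁻¹` and the equation says that
`z` commutes with `i`, i.e. `z` lies in the copy `ℝ + ℝ i` of `ℂ`; the unit complex numbers there are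
exactly the `cos θ + sin θ • i`.
-/

open Quaternion

@[simp] lemma quatI_re : quatI.re = 0 := rfl
@[simp] lemma quatI_imI : quatI.imI = 1 := rfl
@[simp] lemma quatI_imJ : quatI.imJ = 0 := rfl
@[simp] lemma quatI_imK : quatI.imK = 0 := rfl

lemma quatI_ne_zero : quatI ≠ 0 := fun h => by simpa using congrArg QuaternionAlgebra.imI h

lemma Real.exists_cos_eq_sin_eq {a b : ℝ} (h : a ^ 2 + b ^ 2 = 1) :
    ∃ θ : ℝ, Real.cos θ = a ∧ Real.sin θ = b := by
  have hnorm : ‖(⟨a, b⟩ : ℂ)‖ = 1 := by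
    rw [Complex.norm_def, Complex.normSq_mk, ← sq, ← sq, h, Real.sqrt_one]
  obtain ⟨θ, hθ⟩ := (Complex.norm_eq_one_iff _).1 hnorm
  exact ⟨θ, by simpa using congrArg Complex.re hθ, by simpa using congrArg Complex.im hθ⟩

namespace Quaternion

section CommRing

variable {R : Type*} [CommRing R]

lemma star_mul_mul_mul (z w q : ℍ[R]) :
    star (z * w) * q * (z * w) = star w * (star z * q * z) * w := by
  simp only [star_mul, mul_assoc]

lemma star_mul_mul_self_of_commute {z q : ℍ[R]} (h : Commute z q) :
    star z * q * z = normSq z * q := by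
  rw [mul_assoc, ← h.eq, ← mul_assoc, star_mul_self]

end CommRing

variable {R : Type*} [CommRing R] [LinearOrder R] [IsStrictOrderedRing R]

lemma star_mul_mul_self_eq_self_iff {z q : ℍ[R]} (hq : q ≠ 0) :
    star z * q * z = q ↔ Commute z q ∧ normSq z = 1 := by
  constructor
  · intro h
    have hz : normSq z = 1 := by
      have hnq : normSq q ≠ 0 := normSq_eq_zero.not.2 hq
      have h2 : normSq z ^ 2 * normSq q = 1 * normSq q := by
        simpa only [map_mul, normSq_star, one_mul, sq, mul_right_comm] using congrArg normSq h
      exact (pow_eq_one_iff_of_nonneg normSq_nonneg two_ne_zero).1 (mul_right_cancel₀ hnq h2)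
    refine ⟨?_, hz⟩
    calc z * q = z * (star z * q * z) := by rw [h]
      _ = z * star z * q * z := by simp only [mul_assoc]
      _ = q * z := by rw [self_mul_star, hz, coe_one, one_mul]
  · rintro ⟨hc, hz⟩
    rw [star_mul_mul_self_of_commute hc, hz, coe_one, one_mul]

end Quaternion

noncomputable def expQuatI (θ : ℝ) : Quaternion ℝ :=
  (Real.cos θ : Quaternion ℝ) + Real.sin θ • quatI

lemma commute_quatI_iff {z : Quaternion ℝ} : Commute z quatI ↔ z.imJ = 0 ∧ z.imK = 0 := by
  simp only [Commute, SemiconjBy, Quaternion.ext_iff, re_mul, imI_mul, imJ_mul, imK_mul,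
    quatI_re, quatI_imI, quatI_imJ, quatI_imK]
  constructor
  · rintro ⟨-, -, hj, hk⟩
    constructor <;> linarith
  · rintro ⟨hj, hk⟩
    simp [hj, hk]

lemma commute_expQuatI (θ : ℝ) : Commute (expQuatI θ) quatI :=
  commute_quatI_iff.2 ⟨by simp [expQuatI], by simp [expQuatI]⟩

lemma normSq_expQuatI (θ : ℝ) : normSq (expQuatI θ) = 1 := by
  simp [normSq_def', expQuatI]

lemma exists_expQuatI_eq {z : Quaternion ℝ} (hc : Commute z quatI) (hz : normSq z = 1) :
    ∃ θ, expQuatI θ = z := by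
  obtain ⟨hj, hk⟩ := commute_quatI_iff.1 hc
  rw [normSq_def', hj, hk] at hz
  obtain ⟨θ, hcos, hsin⟩ := Real.exists_cos_eq_sin_eq (a := z.re) (b := z.imI) (by linarith)
  exact ⟨θ, by ext <;> simp [expQuatI, hcos, hsin, hj, hk]⟩

lemma star_mul_quatI_mul_self_eq_quatI_iff {z : Quaternion ℝ} :
    star z * quatI * z = quatI ↔ ∃ θ, expQuatI θ = z := by
  rw [star_mul_mul_self_eq_self_iff quatI_ne_zero]
  constructor
  · exact fun ⟨hc, hz⟩ => exists_expQuatI_eq hc hz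
  · rintro ⟨θ, rfl⟩
    exact ⟨commute_expQuatI θ, normSq_expQuatI θ⟩

/-- For quaternions `v, w` with `w ≠ 0`,
`conj(v) * i * v = conj(w) * i * w` iff `v = (cos θ + sin θ • i) * w` for some `θ ∈ ℝ`. -/
theorem conj_mul_i_mul_self_eq_iff_circle_orbit (v w : Quaternion ℝ) (hw : w ≠ 0) :
    star v * quatI * v = star w * quatI * w ↔
    ∃ θ : ℝ, v = ((Real.cos θ : Quaternion ℝ) + Real.sin θ • quatI) * w := by
  obtain ⟨z, rfl⟩ : ∃ z, v = z * w := ⟨v * w⁻¹, (inv_mul_cancel_right₀ hw v).symm⟩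
  rw [star_mul_mul_mul, mul_left_inj' hw, mul_right_inj' (star_ne_zero.2 hw),
    star_mul_quatI_mul_self_eq_quatI_iff]
  simp only [mul_left_inj' hw, eq_comm, expQuatI]
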